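/- In a finite-horizon MDP, every policy has an unreachable state-epoch pair if and only if there exist a state s and an epoch t ∈ {2,...,T} such that p_{t-1}(s|s',a') = 0 for every state s' and every action a' ∈ A_{s'}. -/

import Mathlib

/-!
If some state `s` has zero probability of being entered at epoch `t` from every state under
every action, then `P^π(S_t = s | S_0 = j) = 0` for every policy `π` and start `j`. Conversely,
if every state at every epoch has some incoming transition of positive probability, then
under the uniformly randomizing policy every action is taken with positive probability, so
by induction on the epoch every state-epoch pair is reached from some initial state.
-/

open Finset

/-- A finite-horizon MDP with `N` states, horizon `T` (epochs `0,…,T-1`, so `T ≥ 2` has at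
least one decision epoch), action sets `Fin (k s)` for each state `s`, and transition
probabilities `p t s a j = p_t(j | s, a)` governing the move from epoch `t` to `t+1`,
together with a strictly positive initial distribution `α`. -/
structure MDP (N T : ℕ) (k : Fin N → ℕ) : Type where
  p : ℕ → (s : Fin N) → Fin (k s) → Fin N → ℝ
  α : Fin N → ℝ
  p_nonneg : ∀ t s a j, 0 ≤ p t s a j
  p_sum : ∀ t s a, ∑ j, p t s a j = 1
  α_pos : ∀ s, 0 < α s
  α_sum : ∑ s, α s = 1

/-- A (randomized, Markov, non-stationary) policy: `q t s a` is the probability that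
action `a` is chosen in state `s` at decision epoch `t`. -/
structure Policy (N : ℕ) (k : Fin N → ℕ) : Type where
  q : ℕ → (s : Fin N) → Fin (k s) → ℝ
  q_nonneg : ∀ t s a, 0 ≤ q t s a
  q_sum : ∀ t s, ∑ a, q t s a = 1

variable {N T : ℕ} {k : Fin N → ℕ}

/-- `condProb M π j t s` is `P^π(S_t = s | S_0 = j)` (epochs indexed from 0). -/
def condProb (M : MDP N T k) (π : Policy N k) (j : Fin N) : ℕ → Fin N → ℝ
  | 0, s => if s = j then 1 else 0
  | t+1, s => ∑ s', ∑ a, condProb M π j t s' * π.q t s' a * M.p t s' a s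

/-- The state-action frequency `x_{π,t}(s,a) = ∑_j α(j) P^π(S_t = s, A_t = a | S_0 = j)`
(epochs indexed from 0, so the decision epochs are `0,…,T-2`). -/
def xsa (M : MDP N T k) (π : Policy N k) (t : ℕ) (s : Fin N) (a : Fin (k s)) : ℝ :=
  ∑ j, M.α j * condProb M π j t s * π.q t s a

/-- The terminal state frequency `x_{π,T}(s)` (terminal epoch is `T-1` in 0-based indexing). -/
def xT (M : MDP N T k) (π : Policy N k) (s : Fin N) : ℝ :=
  ∑ j, M.α j * condProb M π j (T-1) s

theorem condProb_succ (M : MDP N T k) (π : Policy N k) (j : Fin N) (t : ℕ) (s : Fin N) :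
    condProb M π j (t + 1) s = ∑ s', ∑ a, condProb M π j t s' * π.q t s' a * M.p t s' a s :=
  rfl

theorem condProb_nonneg (M : MDP N T k) (π : Policy N k) (j : Fin N) :
    ∀ t s, 0 ≤ condProb M π j t s
  | 0, s => by simp only [condProb]; split <;> norm_num
  | t + 1, s => by
    rw [condProb_succ]
    exact sum_nonneg fun s' _ => sum_nonneg fun a _ =>
      mul_nonneg (mul_nonneg (condProb_nonneg M π j t s') (π.q_nonneg t s' a))
        (M.p_nonneg t s' a s)

theorem condProb_succ_eq_zero (M : MDP N T k) (π : Policy N k) (j : Fin N) {t : ℕ}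
    {s : Fin N} (hp : ∀ s' a', M.p t s' a' s = 0) : condProb M π j (t + 1) s = 0 := by
  rw [condProb_succ]
  exact sum_eq_zero fun s' _ => sum_eq_zero fun a _ => by rw [hp, mul_zero]

theorem condProb_succ_pos (M : MDP N T k) (π : Policy N k) (j : Fin N) {t : ℕ}
    {s s' : Fin N} {a' : Fin (k s')} (hc : 0 < condProb M π j t s') (hq : 0 < π.q t s' a')
    (hp : 0 < M.p t s' a' s) : 0 < condProb M π j (t + 1) s := by
  have term_nonneg : ∀ s'' a, 0 ≤ condProb M π j t s'' * π.q t s'' a * M.p t s'' a s :=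
    fun s'' a => mul_nonneg (mul_nonneg (condProb_nonneg M π j t s'') (π.q_nonneg t s'' a))
      (M.p_nonneg t s'' a s)
  rw [condProb_succ]
  refine sum_pos' (fun s'' _ => sum_nonneg fun a _ => term_nonneg s'' a) ⟨s', mem_univ _, ?_⟩
  exact sum_pos' (fun a _ => term_nonneg s' a) ⟨a', mem_univ _, mul_pos (mul_pos hc hq) hp⟩

theorem exists_condProb_pos (M : MDP N T k) (π : Policy N k) (hq : ∀ t s a, 0 < π.q t s a)
    {t : ℕ} (hreach : ∀ u < t, ∀ s, ∃ s' a', M.p u s' a' s ≠ 0) (s : Fin N) :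
    ∃ j, 0 < condProb M π j t s := by
  induction t generalizing s with
  | zero => exact ⟨s, by simp [condProb]⟩
  | succ t ih =>
    obtain ⟨s', a', hp⟩ := hreach t t.lt_succ_self s
    obtain ⟨j, hj⟩ := ih (fun u hu => hreach u (hu.trans t.lt_succ_self)) s'
    exact ⟨j, condProb_succ_pos M π j hj (hq t s' a') ((M.p_nonneg t s' a' s).lt_of_ne' hp)⟩

noncomputable def Policy.uniform (hk : ∀ s, 0 < k s) : Policy N k where
  q _ s _ := (k s : ℝ)⁻¹
  q_nonneg _ s _ := by positivity
  q_sum _ s := by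
    rw [sum_const, card_univ, Fintype.card_fin, nsmul_eq_mul]
    exact mul_inv_cancel₀ (Nat.cast_ne_zero.mpr (hk s).ne')

theorem Policy.uniform_q_pos (hk : ∀ s, 0 < k s) (t : ℕ) (s : Fin N) (a : Fin (k s)) :
    0 < (Policy.uniform hk).q t s a :=
  inv_pos.mpr (Nat.cast_pos.mpr (hk s))

theorem all_policies_have_unreachable_iff_general (N T : ℕ) (k : Fin N → ℕ)
    (hk : ∀ s, 1 ≤ k s) (M : MDP N T k) :
    (∀ π : Policy N k, ∃ s : Fin N, ∃ t : ℕ, t ≤ T - 1 ∧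
        ∀ j, condProb M π j t s = 0) ↔
      (∃ s : Fin N, ∃ t : ℕ, 1 ≤ t ∧ t ≤ T - 1 ∧
        ∀ s' : Fin N, ∀ a' : Fin (k s'), M.p (t-1) s' a' s = 0) := by
  constructor
  · intro h
    by_contra! hreach
    obtain ⟨s, t, ht, hzero⟩ := h (Policy.uniform hk)
    obtain ⟨j, hj⟩ := exists_condProb_pos M _ (Policy.uniform_q_pos hk) (t := t)
      (fun u hu s => hreach s (u + 1) u.succ_pos (by omega)) s
    exact hj.ne' (hzero j)
  · rintro ⟨s, _ | t, ht1, ht, hp⟩ π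
    · omega
    · exact ⟨s, t + 1, ht, fun j => condProb_succ_eq_zero M π j hp⟩

/-- every policy has an unreachable state-epoch pair iff there exist a state
`s` and an epoch `t ∈ {1,…,T-1}` (0-based; the paper's `t ∈ {2,…,T}`) such that
`p_{t-1}(s | s', a') = 0` for every state `s'` and every action `a'`. -/
theorem all_policies_have_unreachable_iff (N T : ℕ) (k : Fin N → ℕ)
    (hk : ∀ s, 1 ≤ k s) (hT : 2 ≤ T) (M : MDP N T k) :
    (∀ π : Policy N k, ∃ s : Fin N, ∃ t : ℕ, t ≤ T - 1 ∧
        ∀ j, condProb M π j t s = 0) ↔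
      (∃ s : Fin N, ∃ t : ℕ, 1 ≤ t ∧ t ≤ T - 1 ∧
        ∀ s' : Fin N, ∀ a' : Fin (k s'), M.p (t-1) s' a' s = 0) :=
  all_policies_have_unreachable_iff_general N T k hk M
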